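/- The class of sets of PA degree is a null class: {Z ∈ 2^ℕ : Z computes a {0,1}-valued diagonally noncomputable function} has Lebesgue measure zero. -/

import Mathlib

/-!
Background definitions: oracle computability via codes, the jump, Turing and
truth-table reducibility, jump traceability, Cantor space measure notions,
effective (Σ/Π) classes, Martin-Löf randomness, and prefix-free complexity.
-/

namespace Superhigh

open Nat
open scoped Classical

/-- Codes for oracle Turing machines: the constructors of `Nat.Partrec.Code`
plus an `oracle` constructor. -/
inductive OCode : Type
  | zero : OCode
  | succ : OCode
  | left : OCode
  | right : OCode
  | oracle : OCode
  | pair : OCode → OCode → OCode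
  | comp : OCode → OCode → OCode
  | prec : OCode → OCode → OCode
  | rfind' : OCode → OCode

/-- Evaluation of an oracle code with oracle `O` (a partial function on ℕ). -/
def OCode.eval (O : ℕ →. ℕ) : OCode → ℕ →. ℕ
  | .zero => pure 0
  | .succ => fun n => Part.some (n + 1)
  | .left => fun n => Part.some (Nat.unpair n).1
  | .right => fun n => Part.some (Nat.unpair n).2
  | .oracle => O
  | .pair cf cg => fun n => Nat.pair <$> cf.eval O n <*> cg.eval O n
  | .comp cf cg => fun n => cg.eval O n >>= cf.eval O
  | .prec cf cg =>
    Nat.unpaired fun a n =>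
      n.rec (cf.eval O a) fun y IH => do
        let i ← IH
        cg.eval O (Nat.pair a (Nat.pair y i))
  | .rfind' cf =>
    Nat.unpaired fun a m =>
      (Nat.rfind fun n => (fun m => m = 0) <$> cf.eval O (Nat.pair a (n + m))).map (· + m)

/-- A standard numbering of the oracle codes. -/
def OCode.ofNat : ℕ → OCode
  | 0 => .zero
  | 1 => .succ
  | 2 => .left
  | 3 => .right
  | 4 => .oracle
  | n + 5 =>
    let m := n.div2.div2
    have hm : m < n + 5 := by
      simp only [m, Nat.div2_val]
      exact lt_of_le_of_lt (le_trans (Nat.div_le_self _ _) (Nat.div_le_self _ _)) (by omega)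
    have _m1 : m.unpair.1 < n + 5 := lt_of_le_of_lt m.unpair_left_le hm
    have _m2 : m.unpair.2 < n + 5 := lt_of_le_of_lt m.unpair_right_le hm
    match n.bodd, n.div2.bodd with
    | false, false => .pair (OCode.ofNat m.unpair.1) (OCode.ofNat m.unpair.2)
    | false, true => .comp (OCode.ofNat m.unpair.1) (OCode.ofNat m.unpair.2)
    | true, false => .prec (OCode.ofNat m.unpair.1) (OCode.ofNat m.unpair.2)
    | true, true => .rfind' (OCode.ofNat m)
decreasing_by
  all_goals first
    | exact _m1
    | exact _m2
    | exact hm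

/-- The characteristic (partial, but total-valued) function of a set of naturals,
used as a Turing oracle. -/
noncomputable def chi (A : Set ℕ) : ℕ →. ℕ :=
  fun n => Part.some (if n ∈ A then 1 else 0)

/-- `Φ^X_e`: the `e`-th function partial computable in the oracle set `X`. -/
noncomputable def phi (X : Set ℕ) (e : ℕ) : ℕ →. ℕ :=
  (OCode.ofNat e).eval (chi X)

/-- `J^X(e) = Φ^X_e(e)`, the diagonal jump function. -/
noncomputable def jumpFn (X : Set ℕ) : ℕ →. ℕ := fun e => phi X e e

/-- The Turing jump `X' = { e : J^X(e)↓ }`. -/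
noncomputable def jump (X : Set ℕ) : Set ℕ := { e | (jumpFn X e).Dom }

/-- `W^Y_m`: the domain of `Φ^Y_m`, i.e. the `m`-th set c.e. in `Y`. -/
noncomputable def W (Y : Set ℕ) (m : ℕ) : Set ℕ := { n | (phi Y m n).Dom }

/-- A partial function is partial computable in the oracle `O` iff some oracle
code computes it. -/
def RecursiveIn (O : ℕ →. ℕ) (f : ℕ →. ℕ) : Prop :=
  ∃ c : OCode, c.eval O = f

/-- Turing reducibility `A ≤_T B` for sets of naturals. -/
noncomputable def TuringLE (A B : Set ℕ) : Prop :=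
  RecursiveIn (chi B) (chi A)

/-- A (total) function between encodable types is computable in the oracle set `A`. -/
def ComputableIn {α β : Type*} [Encodable α] [Encodable β] (A : Set ℕ) (f : α → β) : Prop :=
  ∃ c : OCode, ∀ a : α,
    c.eval (chi A) (Encodable.encode a) = Part.some (Encodable.encode (f a))

/-- A set is computably enumerable in `B` if it is the domain of a function
partial computable in `B`. -/
noncomputable def CEIn (B A : Set ℕ) : Prop := ∃ m : ℕ, A = W B m

/-- A set is computably enumerable. -/
noncomputable def CE (A : Set ℕ) : Prop := CEIn ∅ A

/-- Truth-table reducibility `A ≤_tt B`: there is a Turing functional which is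
total for every oracle and computes `A` from `B`. -/
def ttLE (A B : Set ℕ) : Prop :=
  ∃ c : OCode, (∀ X : Set ℕ, ∀ n, ((c.eval (chi X)) n).Dom) ∧
    ∀ n, n ∈ A ↔ 1 ∈ c.eval (chi B) n

/-- Truth-table equivalence. -/
def ttEquiv (A B : Set ℕ) : Prop := ttLE A B ∧ ttLE B A

/-- `X` is jump traceable by `Y` with trace bound `g`: there is a computable `f`
such that `W^Y_{f(n)}` is finite with at most `g n` elements and contains
`J^X(n)` whenever the latter is defined. -/
noncomputable def JumpTraceableByWith (X Y : Set ℕ) (g : ℕ → ℕ) : Prop :=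
  ∃ f : ℕ → ℕ, Computable f ∧
    ∀ n : ℕ, (W Y (f n)).Finite ∧ (W Y (f n)).ncard ≤ g n ∧
      ∀ v : ℕ, v ∈ jumpFn X n → v ∈ W Y (f n)

/-- `X ≤_JT Y`: `X` is jump traceable by `Y`. -/
noncomputable def JumpTraceableBy (X Y : Set ℕ) : Prop :=
  ∃ g : ℕ → ℕ, Computable g ∧ JumpTraceableByWith X Y g

/-- A set is jump traceable if it is jump traceable by the empty oracle. -/
noncomputable def JumpTraceable (X : Set ℕ) : Prop := JumpTraceableBy X ∅

/-- `A` is JT-hard if `∅' ≤_JT A`. -/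
noncomputable def JTHard (A : Set ℕ) : Prop := JumpTraceableBy (jump ∅) A

/-- `A` is superhigh if `∅'' ≤_tt A'`. -/
noncomputable def SuperhighSet (A : Set ℕ) : Prop := ttLE (jump (jump ∅)) (jump A)

/-- `A` is high if `∅'' ≤_T A'`. -/
noncomputable def High (A : Set ℕ) : Prop := TuringLE (jump (jump ∅)) (jump A)

/-- `A` is Turing complete if `∅' ≤_T A`. -/
noncomputable def TuringComplete (A : Set ℕ) : Prop := TuringLE (jump ∅) A

/-- The subset of ℕ coded by a point of Cantor space. -/
def toSet (X : ℕ → Bool) : Set ℕ := { n | X n = true }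

/-- The basic clopen cylinder of Cantor space determined by a finite binary string. -/
def cylinder (σ : List Bool) : Set (ℕ → Bool) :=
  { X | List.ofFn (fun i : Fin σ.length => X i) = σ }

/-- The prefix of `X` of length `n`, as a finite binary string. -/
def prefixOf (X : ℕ → Bool) (n : ℕ) : List Bool := List.ofFn fun i : Fin n => X i

/-- `μ` is the fair-coin Lebesgue measure on Cantor space: every basic cylinder
determined by a string of length `k` has measure `2^{-k}`. -/
def IsFairCoin (μ : MeasureTheory.Measure (ℕ → Bool)) : Prop :=
  ∀ σ : List Bool, μ (cylinder σ) = (1 / 2 : ENNReal) ^ σ.length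

/-- `A` is almost everywhere dominating (w.r.t. the fair-coin measure `μ`):
for almost every `X`, every `X`-computable function is dominated by some
`A`-computable function. -/
noncomputable def AED (μ : MeasureTheory.Measure (ℕ → Bool)) (A : Set ℕ) : Prop :=
  ∀ᵐ X ∂μ, ∀ f : ℕ → ℕ, ComputableIn (toSet X) f →
    ∃ g : ℕ → ℕ, ComputableIn A g ∧ ∀ᶠ n in Filter.atTop, f n ≤ g n

/-- `f` is boundedly limit computable by `A`: `f` is the limit of an
`A`-computable approximation whose number of changes is computably bounded. -/
noncomputable def BLR (A : Set ℕ) (f : ℕ → ℕ) : Prop :=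
  ∃ F : ℕ → ℕ → ℕ, ComputableIn A (fun p : ℕ × ℕ => F p.1 p.2) ∧
    (∀ n, ∃ N, ∀ s ≥ N, F n s = f n) ∧
    ∃ g : ℕ → ℕ, Computable g ∧
      ∀ n, { s | F n s ≠ F n (s + 1) }.Finite ∧
        { s | F n s ≠ F n (s + 1) }.ncard < g n

/-- A Π⁰₁ class: the sets of branches avoided by no level of a computable
tree-style predicate on strings. -/
def PiOneClass (P : Set (ℕ → Bool)) : Prop :=
  ∃ f : List Bool → Bool, Computable f ∧
    P = { X | ∀ n : ℕ, f (prefixOf X n) = true }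

/-- A Π⁰₁(A) class (effectively closed relative to the oracle `A`). -/
def PiOneClassIn (A : Set ℕ) (P : Set (ℕ → Bool)) : Prop :=
  ∃ f : List Bool → Bool, ComputableIn A f ∧
    P = { X | ∀ n : ℕ, f (prefixOf X n) = true }

/-- A Π⁰₂ class. -/
def PiTwoClass (P : Set (ℕ → Bool)) : Prop :=
  ∃ f : ℕ → List Bool → Bool, Computable₂ f ∧
    P = { X | ∀ u : ℕ, ∃ n : ℕ, f u (prefixOf X n) = true }

/-- A Σ⁰₃ class (an effective union of Π⁰₂ classes). -/
def SigmaThreeClass (S : Set (ℕ → Bool)) : Prop :=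
  ∃ f : ℕ → ℕ → List Bool → Bool, (Computable fun p : ℕ × ℕ × List Bool => f p.1 p.2.1 p.2.2) ∧
    S = { X | ∃ e : ℕ, ∀ u : ℕ, ∃ n : ℕ, f e u (prefixOf X n) = true }

/-- `Z` is Martin-Löf random relative to the oracle `A` (w.r.t. the fair-coin
measure `μ`): `Z` passes every `A`-Martin-Löf test, where a test is a uniformly
`Σ⁰₁(A)` sequence of open sets `G_m` with `μ (G_m) ≤ 2^{-m}`. -/
noncomputable def MLRandomIn (μ : MeasureTheory.Measure (ℕ → Bool)) (A : Set ℕ)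
    (Z : ℕ → Bool) : Prop :=
  ∀ f : ℕ × List Bool → Bool, ComputableIn A f →
    (∀ m : ℕ, μ { X | ∃ n : ℕ, f (m, prefixOf X n) = true } ≤ (1 / 2 : ENNReal) ^ m) →
    ¬∀ m : ℕ, ∃ n : ℕ, f (m, prefixOf Z n) = true

/-- `Z` is Martin-Löf random (w.r.t. the fair-coin measure `μ`). -/
noncomputable def MLRandom (μ : MeasureTheory.Measure (ℕ → Bool)) (Z : ℕ → Bool) : Prop :=
  MLRandomIn μ ∅ Z

/-- `Z` is weakly 2-random: `Z` belongs to no null Π⁰₂ class. -/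
noncomputable def WeaklyTwoRandom (μ : MeasureTheory.Measure (ℕ → Bool)) (Z : ℕ → Bool) : Prop :=
  ∀ P : Set (ℕ → Bool), PiTwoClass P → μ P = 0 → Z ∉ P

/-- A prefix-free machine: a partial computable map from binary strings to
naturals whose domain is an antichain under the prefix relation. -/
structure PFMachine where
  M : List Bool →. ℕ
  partrec : Partrec M
  prefixFree : ∀ σ τ : List Bool, σ <+: τ → (M σ).Dom → (M τ).Dom → σ = τ

/-- The prefix-free complexity of `x` relative to the machine `M` (with value
`⊤` when `x` is not in the range of `M`). -/
noncomputable def Kof (M : PFMachine) (x : ℕ) : ℕ∞ :=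
  sInf { d : ℕ∞ | ∃ σ : List Bool, (σ.length : ℕ∞) = d ∧ x ∈ M.M σ }

/-- An optimal (universal) prefix-free machine. -/
def OptimalPF (U : PFMachine) : Prop :=
  ∀ M : PFMachine, ∃ c : ℕ, ∀ (x : ℕ) (σ : List Bool), x ∈ M.M σ →
    ∃ τ : List Bool, τ.length ≤ σ.length + c ∧ x ∈ U.M τ

/-- The prefix of the characteristic sequence of `B ⊆ ℕ` of length `n`, coded
as a natural number. -/
noncomputable def restrictCode (B : Set ℕ) (n : ℕ) : ℕ :=
  Encodable.encode (List.ofFn fun i : Fin n => decide ((i : ℕ) ∈ B))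

/-- `B` is `K`-trivial (relative to the optimal machine `U`):
`K(B↾n) ≤ K(n) + b` for some constant `b`. -/
noncomputable def KTrivialFor (U : PFMachine) (B : Set ℕ) : Prop :=
  ∃ b : ℕ, ∀ n : ℕ, Kof U (restrictCode B n) ≤ Kof U n + (b : ℕ∞)

/-- `B` is `K`-trivial: `K(B↾n) ≤ K(n) + O(1)` for every optimal prefix-free machine. -/
noncomputable def KTrivial (B : Set ℕ) : Prop :=
  ∀ U : PFMachine, OptimalPF U → KTrivialFor U B


/-- `f` is a {0,1}-valued function that is diagonally noncomputable relative to the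
oracle `A`: `f(e) ≠ J^A(e)` whenever `J^A(e)` is defined. -/
noncomputable def DNCBoolRel (A : Set ℕ) (f : ℕ → Bool) : Prop :=
  ∀ (e v : ℕ), v ∈ jumpFn A e → (cond (f e) 1 0 : ℕ) ≠ v


/-!
Fix an oracle code `c` and let `S` be the class of oracles `Z` for which `c` computes a
`{0,1}`-valued DNC function. If `S` had positive measure, then by outer regularity it would fill
more than two thirds of some cylinder `[σ₀]`. Given `e`, search for a stage `k` and a value
`u ∈ {0,1}` such that the oracles in `[σ₀]` on which `c` outputs `u` on input `e` by stage `k`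
fill more than a third of `[σ₀]`. The search succeeds, because `S ∩ [σ₀]` is covered by the two
votes in the limit; and its result is never `J(e)`, because the vote for `J(e)` is disjoint from
`S ∩ [σ₀]`, and the two together would outweigh `[σ₀]`. This total computable function that
differs from `J` everywhere is impossible at its own index. Finally there are only countably many
codes `c`.
-/
open Nat.Partrec (Code)
open Filter MeasureTheory
open scoped ENNReal

theorem Partrec₂.exists_code_curry {α : Type*} [Primcodable α] {f : α → ℕ →. ℕ}
    (hf : Partrec₂ f) : ∃ d : Code, ∀ a, (d.curry (Encodable.encode a)).eval = f a := by
  obtain ⟨d, hd⟩ := Code.exists_code.1 hf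
  refine ⟨d, fun a => funext fun x => ?_⟩
  have hx : Nat.pair (Encodable.encode a) x = Encodable.encode (a, x) := rfl
  rw [Code.eval_curry, hd, hx]
  simp only [Encodable.encodek, Part.coe_some, Part.bind_some]
  exact Part.map_id' (fun _ => rfl) _

namespace OCode

def encode : OCode → ℕ
  | zero => 0
  | succ => 1
  | left => 2
  | right => 3
  | oracle => 4
  | pair cf cg => 2 * (2 * Nat.pair cf.encode cg.encode) + 5
  | comp cf cg => 2 * (2 * Nat.pair cf.encode cg.encode + 1) + 5
  | prec cf cg => (2 * (2 * Nat.pair cf.encode cg.encode) + 1) + 5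
  | rfind' cf => (2 * (2 * cf.encode + 1) + 1) + 5

theorem ofNat_encode (c : OCode) : ofNat c.encode = c := by
  induction c <;> simp only [encode] <;> rw [ofNat] <;> simp [Nat.div2_val, *]

theorem ofNat_surjective : Function.Surjective ofNat :=
  fun c => ⟨c.encode, c.ofNat_encode⟩

instance : Countable OCode := ofNat_surjective.countable

theorem eventually_mem_eval {ι : Type*} {l : Filter ι} {O : ℕ →. ℕ} {Os : ι → ℕ →. ℕ}
    (hO : ∀ n v, v ∈ O n → ∀ᶠ i in l, v ∈ Os i n) (c : OCode) {n v : ℕ}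
    (hv : v ∈ c.eval O n) : ∀ᶠ i in l, v ∈ c.eval (Os i) n := by
  induction c generalizing n v with
  | zero | succ | left | right => exact Eventually.of_forall fun _ => hv
  | oracle => exact hO n v hv
  | pair cf cg ihf ihg =>
    simp only [eval, Seq.seq, Part.map_eq_map, Part.mem_bind_iff, Part.mem_map_iff] at hv ⊢
    obtain ⟨_, ⟨x, hx, rfl⟩, y, hy, rfl⟩ := hv
    filter_upwards [ihf hx, ihg hy] with i hx hy
    exact ⟨_, ⟨x, hx, rfl⟩, y, hy, rfl⟩
  | comp cf cg ihf ihg =>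
    obtain ⟨x, hx, hv⟩ := Part.mem_bind_iff.1 (show v ∈ (cg.eval O n).bind (cf.eval O) from hv)
    filter_upwards [ihg hx, ihf hv] with i hx hv
    exact Part.mem_bind hx hv
  | prec cf cg ihf ihg =>
    revert hv
    simp only [eval, Nat.unpaired]
    induction n.unpair.2 generalizing v with
    | zero => exact ihf
    | succ m ihm =>
      intro hv
      obtain ⟨x, hx, hv⟩ := Part.mem_bind_iff.1 hv
      filter_upwards [ihm hx, ihg hv] with i hx hv
      exact Part.mem_bind hx hv
  | rfind' cf ih =>
    simp only [eval, Nat.unpaired, Part.mem_map_iff] at hv ⊢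
    obtain ⟨w, hw, rfl⟩ := hv
    obtain ⟨hw, hlt⟩ := Nat.mem_rfind.1 hw
    have step : ∀ {t : ℕ} {b : Bool},
        b ∈ (fun m => decide (m = 0)) <$> cf.eval O (Nat.pair n.unpair.1 (t + n.unpair.2)) →
        ∀ᶠ i in l, b ∈ (fun m => decide (m = 0)) <$>
          cf.eval (Os i) (Nat.pair n.unpair.1 (t + n.unpair.2)) := by
      intro t b hb
      obtain ⟨u, hu, rfl⟩ := (Part.mem_map_iff _).1 hb
      exact (ih hu).mono fun i hu => Part.mem_map _ hu
    have hlt' := (eventually_all_finite (Set.finite_lt_nat w)).2 fun t ht => step (hlt ht)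
    filter_upwards [step hw, hlt'] with i hw hlt
    exact ⟨w, Nat.mem_rfind.2 ⟨hw, hlt _⟩, rfl⟩

theorem eval_mono (c : OCode) {O O' : ℕ →. ℕ} (h : ∀ n, O n ≤ O' n) (n : ℕ) :
    c.eval O n ≤ c.eval O' n :=
  fun _ hv => eventually_top.1
    (eventually_mem_eval (l := ⊤) (Os := fun _ : Unit => O')
      (fun n v hv => eventually_top.2 fun _ => h n v hv) c hv) ()

def ofCode : Code → OCode
  | .zero => zero
  | .succ => succ
  | .left => left
  | .right => right
  | .pair a b => pair (ofCode a) (ofCode b)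
  | .comp a b => comp (ofCode a) (ofCode b)
  | .prec a b => prec (ofCode a) (ofCode b)
  | .rfind' a => rfind' (ofCode a)

theorem eval_ofCode (O : ℕ →. ℕ) (d : Code) : (ofCode d).eval O = d.eval := by
  induction d with
  | zero | succ | left | right => rfl
  | pair a b iha ihb | comp a b iha ihb | prec a b iha ihb =>
    funext n; simp only [ofCode, eval, Code.eval, iha, ihb]
  | rfind' a iha => funext n; simp only [ofCode, eval, Code.eval, iha]

end OCode

theorem exists_jumpFn_eq {h : ℕ →. ℕ} (hh : Nat.Partrec h) (X : Set ℕ) :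
    ∃ e, jumpFn X e = h e := by
  obtain ⟨d, rfl⟩ := Code.exists_code.1 hh
  obtain ⟨e, he⟩ := OCode.ofNat_surjective (OCode.ofCode d)
  exact ⟨e, by rw [jumpFn, phi, he, OCode.eval_ofCode]⟩

def strings : ℕ → List (List Bool)
  | 0 => [[]]
  | k + 1 => (strings k).flatMap fun σ => [false :: σ, true :: σ]

theorem mem_strings {k : ℕ} {σ : List Bool} : σ ∈ strings k ↔ σ.length = k := by
  induction k generalizing σ with
  | zero => simp [strings]
  | succ k ih =>
    cases σ with
    | nil => simp [strings]
    | cons b σ => cases b <;> simp [strings, ih]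

theorem nodup_strings (k : ℕ) : (strings k).Nodup := by
  induction k with
  | zero => simp [strings]
  | succ k ih =>
    refine List.nodup_flatMap.2 ⟨fun σ _ => by simp, ih.imp fun hne => ?_⟩
    simp [Function.onFun, hne.symm]

theorem primrec_strings : Primrec strings := by
  have hstep : Primrec₂ fun (_ : ℕ) (L : List (List Bool)) =>
      L.flatMap fun σ => [false :: σ, true :: σ] :=
    (Primrec.list_flatMap Primrec.snd (Primrec.list_cons.comp
      (Primrec.list_cons.comp (Primrec.const false) Primrec.snd)
      (Primrec.list_cons.comp (Primrec.list_cons.comp (Primrec.const true) Primrec.snd)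
        (Primrec.const []))).to₂).to₂
  refine (Primrec.nat_rec₁ [[]] hstep).of_eq fun k => ?_
  induction k <;> simp [strings, *]

theorem mem_cylinder_iff {σ : List Bool} {Z : ℕ → Bool} :
    Z ∈ cylinder σ ↔ prefixOf Z σ.length = σ := Iff.rfl

@[simp]
theorem length_prefixOf (Z : ℕ → Bool) (k : ℕ) : (prefixOf Z k).length = k := by
  simp [prefixOf]

@[simp]
theorem take_prefixOf (Z : ℕ → Bool) (j k : ℕ) :
    (prefixOf Z k).take j = prefixOf Z (min j k) := by
  apply List.ext_getElem <;> simp [prefixOf]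

theorem mem_cylinder_prefixOf (Z : ℕ → Bool) (k : ℕ) : Z ∈ cylinder (prefixOf Z k) := by
  rw [mem_cylinder_iff, length_prefixOf]

theorem cylinder_nil : cylinder [] = Set.univ := by
  ext Z; simp [cylinder]

theorem cylinder_prefixOf (Z : ℕ → Bool) (k : ℕ) :
    cylinder (prefixOf Z k) = PiNat.cylinder Z k := by
  ext Y
  simp [mem_cylinder_iff, PiNat.mem_cylinder_iff, prefixOf, List.ofFn_inj, funext_iff,
    Fin.forall_iff]

theorem isOpen_cylinder (σ : List Bool) : IsOpen (cylinder σ) := by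
  refine isOpen_iff_forall_mem_open.2 fun Z hZ => ⟨cylinder σ, subset_rfl, ?_, hZ⟩
  rw [← mem_cylinder_iff.1 hZ, cylinder_prefixOf]
  exact PiNat.isOpen_cylinder _ Z _

theorem exists_cylinder_prefixOf_subset {U : Set (ℕ → Bool)} (hU : IsOpen U) {Z : ℕ → Bool}
    (hZ : Z ∈ U) : ∃ k, cylinder (prefixOf Z k) ⊆ U := by
  obtain ⟨_, ⟨Y, k, rfl⟩, hZY, hYU⟩ :=
    (PiNat.isTopologicalBasis_cylinders fun _ => Bool).exists_subset_of_mem_open hZ hU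
  exact ⟨k, by rwa [cylinder_prefixOf, PiNat.mem_cylinder_iff_eq.1 hZY]⟩

theorem pairwiseDisjoint_cylinder (k : ℕ) :
    {σ : List Bool | σ.length = k}.PairwiseDisjoint cylinder := by
  intro σ hσ τ hτ hne
  refine Set.disjoint_left.2 fun Z hZσ hZτ => hne ?_
  rw [← mem_cylinder_iff.1 hZσ, ← mem_cylinder_iff.1 hZτ, hσ, hτ]

theorem getElem?_prefixOf (Z : ℕ → Bool) (k n : ℕ) :
    (prefixOf Z k)[n]? = if n < k then some (Z n) else none := by
  split_ifs with h <;> simp [prefixOf, h]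

/-- Queries beyond `σ.length` diverge, so that `stringOracle (prefixOf Z k)` lies below
`chi (toSet Z)`. -/
def stringOracle (σ : List Bool) : ℕ →. ℕ := fun n => σ[n]?.map fun b => cond b 1 0

theorem mem_stringOracle_prefixOf {Z : ℕ → Bool} {k n v : ℕ} :
    v ∈ stringOracle (prefixOf Z k) n ↔ n < k ∧ v ∈ chi (toSet Z) n := by
  rw [stringOracle, getElem?_prefixOf]
  split_ifs with h <;> cases hZ : Z n <;> simp [chi, toSet, h, hZ]

theorem stringOracle_prefixOf_le (Z : ℕ → Bool) (k n : ℕ) :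
    stringOracle (prefixOf Z k) n ≤ chi (toSet Z) n :=
  fun _ hv => (mem_stringOracle_prefixOf.1 hv).2

theorem eventually_mem_stringOracle_prefixOf {Z : ℕ → Bool} {n v : ℕ}
    (hv : v ∈ chi (toSet Z) n) : ∀ᶠ k in atTop, v ∈ stringOracle (prefixOf Z k) n :=
  (eventually_gt_atTop n).mono fun _ hk => mem_stringOracle_prefixOf.2 ⟨hk, hv⟩

theorem partrec₂_stringOracle : Partrec₂ stringOracle :=
  (Computable.ofOption (Primrec.option_map Primrec.list_getElem?
    (Primrec.cond Primrec.snd (Primrec.const 1) (Primrec.const 0)).to₂).to_comp).to₂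

noncomputable def stringOracleCode : Code :=
  (Partrec₂.exists_code_curry partrec₂_stringOracle).choose

theorem eval_stringOracleCode (σ : List Bool) :
    (stringOracleCode.curry (Encodable.encode σ)).eval = stringOracle σ :=
  (Partrec₂.exists_code_curry partrec₂_stringOracle).choose_spec σ

namespace OCode

noncomputable def toCode (σ : List Bool) : OCode → Code
  | zero => .zero
  | succ => .succ
  | left => .left
  | right => .right
  | oracle => stringOracleCode.curry (Encodable.encode σ)
  | pair a b => .pair (a.toCode σ) (b.toCode σ)
  | comp a b => .comp (a.toCode σ) (b.toCode σ)
  | prec a b => .prec (a.toCode σ) (b.toCode σ)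
  | rfind' a => .rfind' (a.toCode σ)

theorem eval_toCode (σ : List Bool) (c : OCode) :
    (c.toCode σ).eval = c.eval (stringOracle σ) := by
  induction c with
  | zero | succ | left | right => rfl
  | oracle => exact eval_stringOracleCode σ
  | pair a b iha ihb | comp a b iha ihb | prec a b iha ihb =>
    funext n; simp only [toCode, eval, Code.eval, iha, ihb]
  | rfind' a iha => funext n; simp only [toCode, eval, Code.eval, iha]

theorem primrec_toCode (c : OCode) : Primrec fun σ => c.toCode σ := by
  induction c with
  | zero | succ | left | right => exact Primrec.const _
  | oracle => exact Code.primrec₂_curry.comp (Primrec.const _) Primrec.encode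
  | pair a b iha ihb => exact Code.primrec₂_pair.comp iha ihb
  | comp a b iha ihb => exact Code.primrec₂_comp.comp iha ihb
  | prec a b iha ihb => exact Code.primrec₂_prec.comp iha ihb
  | rfind' a iha => exact Code.primrec_rfind'.comp iha

end OCode

theorem setOf_prefixOf_eq_biUnion (P : List Bool → Prop) [DecidablePred P] (k : ℕ) :
    {Z | P (prefixOf Z k)} = ⋃ σ ∈ ((strings k).filter (P ·)).toFinset, cylinder σ := by
  ext Z
  simp only [Set.mem_ofPred_eq, Set.mem_iUnion, List.mem_toFinset, List.mem_filter, mem_strings,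
    decide_eq_true_eq, exists_prop]
  constructor
  · exact fun hZ => ⟨_, ⟨length_prefixOf Z k, hZ⟩, mem_cylinder_prefixOf Z k⟩
  · rintro ⟨σ, ⟨rfl, hσ⟩, hZ⟩
    rwa [mem_cylinder_iff.1 hZ]

theorem measurableSet_setOf_prefixOf (P : List Bool → Prop) [DecidablePred P] (k : ℕ) :
    MeasurableSet {Z | P (prefixOf Z k)} := by
  rw [setOf_prefixOf_eq_biUnion]
  exact Finset.measurableSet_biUnion _ fun σ _ => (isOpen_cylinder σ).measurableSet

theorem IsFairCoin.isProbabilityMeasure {μ : Measure (ℕ → Bool)} (hμ : IsFairCoin μ) :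
    IsProbabilityMeasure μ :=
  ⟨by simpa [cylinder_nil] using hμ []⟩

theorem IsFairCoin.measure_setOf_prefixOf {μ : Measure (ℕ → Bool)} (hμ : IsFairCoin μ)
    (P : List Bool → Prop) [DecidablePred P] (k : ℕ) :
    μ {Z | P (prefixOf Z k)} = ((strings k).filter (P ·)).length * (1 / 2) ^ k := by
  have hsub : (((strings k).filter (P ·)).toFinset : Set (List Bool)) ⊆ {σ | σ.length = k} :=
    fun σ hσ => by simp_all [mem_strings]
  rw [setOf_prefixOf_eq_biUnion, measure_biUnion_finset ((pairwiseDisjoint_cylinder k).subset hsub)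
    fun σ _ => (isOpen_cylinder σ).measurableSet, Finset.sum_congr rfl fun σ hσ => by
      rw [hμ σ, hsub hσ], Finset.sum_const, List.toFinset_card_of_nodup
      ((nodup_strings k).filter _), nsmul_eq_mul]

theorem ENNReal.half_pow_lt_mul_half_pow_iff (n i j : ℕ) :
    (1 / 2 : ℝ≥0∞) ^ i < n * (1 / 2) ^ j ↔ 2 ^ j < n * 2 ^ i := by
  rw [one_div, ← ENNReal.inv_pow, ← ENNReal.inv_pow, ← div_eq_mul_inv,
    ENNReal.lt_div_iff_mul_lt (by simp) (by simp), mul_comm, ← div_eq_mul_inv,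
    ENNReal.div_lt_iff (by simp) (by simp)]
  exact_mod_cast Iff.rfl

theorem measure_inter_le_of_forall_cylinder {μ : Measure (ℕ → Bool)} {a b : ℝ≥0∞}
    {S : Set (ℕ → Bool)} (h : ∀ σ, b * μ (S ∩ cylinder σ) ≤ a * μ (cylinder σ))
    {U : Set (ℕ → Bool)} (hU : IsOpen U) : b * μ (S ∩ U) ≤ a * μ U := by
  set V : ℕ → Set (ℕ → Bool) := fun k => {Z | cylinder (prefixOf Z k) ⊆ U}
  have hVU : ⋃ k, V k = U := Set.Subset.antisymm
    (Set.iUnion_subset fun k Z hZ => hZ (mem_cylinder_prefixOf Z k))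
    fun Z hZ => Set.mem_iUnion.2 (exists_cylinder_prefixOf_subset hU hZ)
  have hV : Monotone fun k => S ∩ V k := fun j k hjk Z ⟨hS, hZ⟩ => ⟨hS, fun Y hY => hZ <| by
    rw [mem_cylinder_iff, length_prefixOf] at hY ⊢
    rw [← min_eq_left hjk, ← take_prefixOf, hY, take_prefixOf, min_eq_left hjk]⟩
  rw [← hVU, Set.inter_iUnion, hV.measure_iUnion, ENNReal.mul_iSup]
  refine iSup_le fun k => ?_
  set F := ((strings k).filter fun σ => decide (cylinder σ ⊆ U)).toFinset
  have hF : (F : Set (List Bool)) ⊆ {σ | σ.length = k} := fun σ hσ => by simp_all [F, mem_strings]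
  have hVk : V k = ⋃ σ ∈ F, cylinder σ := setOf_prefixOf_eq_biUnion (fun σ => cylinder σ ⊆ U) k
  calc b * μ (S ∩ V k)
      ≤ b * ∑ σ ∈ F, μ (S ∩ cylinder σ) := by
        rw [hVk, Set.inter_iUnion₂]
        exact mul_le_mul_right (measure_biUnion_finset_le _ _) b
    _ = ∑ σ ∈ F, b * μ (S ∩ cylinder σ) := Finset.mul_sum _ _ _
    _ ≤ ∑ σ ∈ F, a * μ (cylinder σ) := Finset.sum_le_sum fun σ _ => h σ
    _ = a * μ (V k) := by
        rw [← Finset.mul_sum, hVk, measure_biUnion_finset ((pairwiseDisjoint_cylinder k).subset hF)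
          fun σ _ => (isOpen_cylinder σ).measurableSet]
    _ ≤ a * μ (⋃ k, V k) := mul_le_mul_right (measure_mono (Set.subset_iUnion V k)) a

/-- A weak Lebesgue density theorem, proved by approximating `S` from outside by an open set
(outer regularity), that is, by a union of cylinders. -/
theorem exists_cylinder_lt_measure_inter (μ : Measure (ℕ → Bool)) [IsFiniteMeasure μ]
    {S : Set (ℕ → Bool)} (hS : μ S ≠ 0) {a b : ℝ≥0∞} (hab : a < b) :
    ∃ σ, a * μ (cylinder σ) < b * μ (S ∩ cylinder σ) := by
  by_contra! h
  have hlt : μ S < b * μ S / a := by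
    rw [ENNReal.lt_div_iff_mul_lt (Or.inr (measure_ne_top μ S)) (Or.inl hab.ne_top), mul_comm]
    exact (ENNReal.mul_lt_mul_iff_left hS (measure_ne_top μ S)).2 hab
  obtain ⟨U, hSU, hU, hμU⟩ := S.exists_isOpen_lt_of_lt _ hlt
  have := measure_inter_le_of_forall_cylinder h hU
  rw [Set.inter_eq_left.2 hSU] at this
  exact (this.trans_lt (mul_comm a _ ▸ ENNReal.mul_lt_of_lt_div hμU)).false

def dncClass (c : OCode) : Set (ℕ → Bool) :=
  {Z | ∀ e, ∃ v ≤ 1, v ∈ c.eval (chi (toSet Z)) e ∧ v ∉ jumpFn ∅ e}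

section Vote

variable (c : OCode) (σ₀ : List Bool) (u : ℕ)

/-- The oracle is some prefix of `τ` of length `j ≤ k` rather than `τ` itself so that `voteSet` is
monotone in `k`: `Code.evaln` is not monotone in the oracle string. -/
def Accepts (e k : ℕ) (τ : List Bool) : Prop :=
  τ.take σ₀.length = σ₀ ∧ ∃ j ≤ k, Code.evaln k (c.toCode (τ.take j)) e = some u

def voteSet (e k : ℕ) : Set (ℕ → Bool) := {Z | Accepts c σ₀ u e k (prefixOf Z k)}

noncomputable def voteCount (e k : ℕ) : ℕ :=
  ((strings k).filter (Accepts c σ₀ u e k ·)).length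

/-- `voteSet c σ₀ u e k` has more than a third of the measure of `cylinder σ₀`
(`IsFairCoin.isHeavy_iff`). -/
def IsHeavy (e k : ℕ) : Prop := 2 ^ k < 3 * voteCount c σ₀ u e k * 2 ^ σ₀.length

noncomputable def vote (e : ℕ) : Part ℕ := Nat.rfindOpt fun k =>
  if IsHeavy c σ₀ 0 e k then some 0 else if IsHeavy c σ₀ 1 e k then some 1 else none

theorem primrecRel_accepts :
    PrimrecRel fun (τ : List Bool) (p : ℕ × ℕ) => Accepts c σ₀ u p.1 p.2 τ := by
  have hprefix : PrimrecPred fun q : List Bool × (ℕ × ℕ) => q.1.take σ₀.length = σ₀ :=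
    Primrec.eq.comp (Primrec.list_take.comp (Primrec.const _) Primrec.fst) (Primrec.const _)
  have hhalt : PrimrecRel fun (j : ℕ) (q : List Bool × (ℕ × ℕ)) =>
      Code.evaln q.2.2 (c.toCode (q.1.take j)) q.2.1 = some u :=
    Primrec.eq.comp (Code.primrec_evaln.comp
      (((Primrec.snd.comp (Primrec.snd.comp Primrec.snd)).pair
        ((OCode.primrec_toCode c).comp (Primrec.list_take.comp Primrec.fst
          (Primrec.fst.comp Primrec.snd)))).pair (Primrec.fst.comp (Primrec.snd.comp Primrec.snd))))
      (Primrec.const _)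
  refine (hprefix.and (hhalt.exists_mem_list.comp
    (Primrec.list_range.comp (Primrec.succ.comp (Primrec.snd.comp Primrec.snd))) Primrec.id)).of_eq
    fun q => ?_
  simp [Accepts]

theorem primrec₂_voteCount : Primrec₂ (voteCount c σ₀ u) :=
  Primrec.list_length.comp ((PrimrecRel.listFilter (primrecRel_accepts c σ₀ u)).comp
    (primrec_strings.comp Primrec.snd) Primrec.id)

theorem primrecRel_isHeavy : PrimrecRel (IsHeavy c σ₀ u) := by
  have hpow : Primrec₂ ((· ^ ·) : ℕ → ℕ → ℕ) := Primrec₂.unpaired'.1 Nat.Primrec.pow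
  exact Primrec.nat_lt.comp (hpow.comp (Primrec.const 2) Primrec.snd)
    (Primrec.nat_mul.comp (Primrec.nat_mul.comp (Primrec.const 3) (primrec₂_voteCount c σ₀ u))
      (Primrec.const _))

theorem partrec_vote : Nat.Partrec (vote c σ₀) := by
  refine Partrec.nat_iff.1 (Partrec.rfindOpt ?_)
  exact (Primrec.ite (primrecRel_isHeavy c σ₀ 0) (Primrec.const _) (Primrec.ite
    (primrecRel_isHeavy c σ₀ 1) (Primrec.const _) (Primrec.const _))).to_comp

variable {c σ₀ u} {e k : ℕ}

theorem exists_isHeavy_of_mem_vote {v : ℕ} (hv : v ∈ vote c σ₀ e) :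
    ∃ k, IsHeavy c σ₀ v e k := by
  obtain ⟨k, hk⟩ := Nat.rfindOpt_spec hv
  exact ⟨k, by split_ifs at hk <;> simp_all⟩

theorem vote_dom_of_isHeavy (hk : IsHeavy c σ₀ 0 e k ∨ IsHeavy c σ₀ 1 e k) :
    (vote c σ₀ e).Dom := by
  refine Nat.rfindOpt_dom.2 ⟨k, ?_⟩
  by_cases h0 : IsHeavy c σ₀ 0 e k
  · exact ⟨0, by simp [h0]⟩
  · exact ⟨1, by simp [h0, hk.resolve_left h0]⟩

theorem mem_voteSet_iff {Z : ℕ → Bool} :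
    Z ∈ voteSet c σ₀ u e k ↔ Z ∈ cylinder σ₀ ∧ σ₀.length ≤ k ∧
      ∃ j ≤ k, Code.evaln k (c.toCode (prefixOf Z j)) e = some u := by
  have hprefix : prefixOf Z (min σ₀.length k) = σ₀ ↔ Z ∈ cylinder σ₀ ∧ σ₀.length ≤ k := by
    refine ⟨fun h => ?_, fun ⟨h, hk⟩ => by rwa [min_eq_left hk]⟩
    have hk : min σ₀.length k = σ₀.length := by simpa using congrArg List.length h
    exact ⟨by rwa [hk] at h, by omega⟩
  simp only [voteSet, Accepts, Set.mem_ofPred_eq, take_prefixOf, hprefix, and_assoc]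
  refine and_congr_right fun _ => and_congr_right fun _ => exists_congr fun j => ?_
  exact ⟨fun ⟨hj, h⟩ => ⟨hj, by rwa [min_eq_left hj] at h⟩,
    fun ⟨hj, h⟩ => ⟨hj, by rwa [min_eq_left hj]⟩⟩

theorem voteSet_subset_cylinder : voteSet c σ₀ u e k ⊆ cylinder σ₀ :=
  fun _ hZ => (mem_voteSet_iff.1 hZ).1

theorem voteSet_mono : Monotone (voteSet c σ₀ u e) := by
  intro k k' hk Z hZ
  obtain ⟨hZ, hσ₀, j, hj, hev⟩ := mem_voteSet_iff.1 hZ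
  exact mem_voteSet_iff.2 ⟨hZ, hσ₀.trans hk, j, hj.trans hk, Code.evaln_mono hk hev⟩

theorem mem_eval_of_mem_voteSet {Z : ℕ → Bool} (hZ : Z ∈ voteSet c σ₀ u e k) :
    u ∈ c.eval (chi (toSet Z)) e := by
  obtain ⟨-, -, j, -, hev⟩ := mem_voteSet_iff.1 hZ
  have hu := Code.evaln_sound hev
  rw [OCode.eval_toCode] at hu
  exact c.eval_mono (stringOracle_prefixOf_le Z j) e u hu

theorem exists_mem_voteSet {Z : ℕ → Bool} (hZ : Z ∈ cylinder σ₀)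
    (hu : u ∈ c.eval (chi (toSet Z)) e) : ∃ k, Z ∈ voteSet c σ₀ u e k := by
  obtain ⟨j, hj, hσ₀j⟩ := ((c.eventually_mem_eval
    (fun _ _ hv => eventually_mem_stringOracle_prefixOf hv) hu).and
    (eventually_ge_atTop σ₀.length)).exists
  rw [← OCode.eval_toCode] at hj
  obtain ⟨s, hs⟩ := Code.evaln_complete.1 hj
  exact ⟨max j s, mem_voteSet_iff.2 ⟨hZ, hσ₀j.trans (le_max_left j s), j, le_max_left j s,
    Code.evaln_mono (le_max_right j s) hs⟩⟩

variable {μ : Measure (ℕ → Bool)}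

theorem IsFairCoin.isHeavy_iff (hμ : IsFairCoin μ) :
    IsHeavy c σ₀ u e k ↔ μ (cylinder σ₀) < 3 * μ (voteSet c σ₀ u e k) := by
  rw [voteSet, hμ.measure_setOf_prefixOf, hμ σ₀, ← mul_assoc, IsHeavy, voteCount]
  exact_mod_cast (ENNReal.half_pow_lt_mul_half_pow_iff _ _ _).symm

theorem IsFairCoin.vote_dom (hμ : IsFairCoin μ)
    (hσ₀ : 2 * μ (cylinder σ₀) < 3 * μ (dncClass c ∩ cylinder σ₀)) (e : ℕ) :
    (vote c σ₀ e).Dom := by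
  have hcover : dncClass c ∩ cylinder σ₀ ⊆ ⋃ k, voteSet c σ₀ 0 e k ∪ voteSet c σ₀ 1 e k := by
    rintro Z ⟨hZ, hcyl⟩
    obtain ⟨v, hv1, hv, -⟩ := hZ e
    obtain ⟨k, hk⟩ := exists_mem_voteSet hcyl hv
    interval_cases v
    exacts [Set.mem_iUnion.2 ⟨k, Or.inl hk⟩, Set.mem_iUnion.2 ⟨k, Or.inr hk⟩]
  have hmono : Monotone fun k => voteSet c σ₀ 0 e k ∪ voteSet c σ₀ 1 e k :=
    fun _ _ h => Set.union_subset_union (voteSet_mono h) (voteSet_mono h)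
  have hsup : 2 * μ (cylinder σ₀) < ⨆ k, 3 * μ (voteSet c σ₀ 0 e k ∪ voteSet c σ₀ 1 e k) := by
    rw [← ENNReal.mul_iSup, ← hmono.measure_iUnion]
    exact hσ₀.trans_le (mul_le_mul_right (measure_mono hcover) 3)
  obtain ⟨k, hk⟩ := lt_iSup_iff.1 hsup
  refine vote_dom_of_isHeavy (k := k) ?_
  rw [hμ.isHeavy_iff, hμ.isHeavy_iff]
  by_contra! h
  refine (hk.trans_le ?_).false
  calc 3 * μ (voteSet c σ₀ 0 e k ∪ voteSet c σ₀ 1 e k)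
      ≤ 3 * μ (voteSet c σ₀ 0 e k) + 3 * μ (voteSet c σ₀ 1 e k) := by
        rw [← mul_add]; exact mul_le_mul_right (measure_union_le _ _) 3
    _ ≤ 2 * μ (cylinder σ₀) := by rw [two_mul]; exact add_le_add h.1 h.2

theorem IsFairCoin.notMem_jumpFn_of_mem_vote (hμ : IsFairCoin μ)
    (hσ₀ : 2 * μ (cylinder σ₀) < 3 * μ (dncClass c ∩ cylinder σ₀)) {v : ℕ}
    (hv : v ∈ vote c σ₀ e) : v ∉ jumpFn ∅ e := by
  intro hJ
  obtain ⟨k, hk⟩ := exists_isHeavy_of_mem_vote hv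
  rw [hμ.isHeavy_iff] at hk
  have hdisj : Disjoint (voteSet c σ₀ v e k) (dncClass c ∩ cylinder σ₀) := by
    refine Set.disjoint_left.2 fun Z hV ⟨hZ, _⟩ => ?_
    obtain ⟨w, -, hw, hwJ⟩ := hZ e
    exact hwJ (Part.mem_unique (mem_eval_of_mem_voteSet hV) hw ▸ hJ)
  have hle : μ (voteSet c σ₀ v e k) + μ (dncClass c ∩ cylinder σ₀) ≤ μ (cylinder σ₀) := by
    rw [← measure_union' hdisj (measurableSet_setOf_prefixOf _ k)]
    exact measure_mono (Set.union_subset voteSet_subset_cylinder Set.inter_subset_right)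
  refine lt_irrefl (3 * μ (cylinder σ₀)) ?_
  calc 3 * μ (cylinder σ₀)
      = μ (cylinder σ₀) + 2 * μ (cylinder σ₀) := by ring
    _ < 3 * μ (voteSet c σ₀ v e k) + 3 * μ (dncClass c ∩ cylinder σ₀) := ENNReal.add_lt_add hk hσ₀
    _ ≤ 3 * μ (cylinder σ₀) := by rw [← mul_add]; exact mul_le_mul_right hle 3

end Vote

theorem IsFairCoin.measure_dncClass_eq_zero {μ : Measure (ℕ → Bool)} (hμ : IsFairCoin μ)
    (c : OCode) :
    μ (dncClass c) = 0 := by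
  have := hμ.isProbabilityMeasure
  by_contra hS
  obtain ⟨σ₀, hσ₀⟩ := exists_cylinder_lt_measure_inter μ hS (a := 2) (b := 3) (by norm_num)
  obtain ⟨e, he⟩ := exists_jumpFn_eq (partrec_vote c σ₀) ∅
  have hdom := hμ.vote_dom hσ₀ e
  exact hμ.notMem_jumpFn_of_mem_vote hσ₀ (Part.get_mem hdom) (he.symm ▸ Part.get_mem hdom)

/-- The class of sets of PA degree (those computing a {0,1}-valued diagonally
noncomputable function) is null. -/
theorem PA_degree_null
    (μ : MeasureTheory.Measure (ℕ → Bool)) (hμ : IsFairCoin μ) :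
    μ { Z : ℕ → Bool | ∃ f : ℕ → Bool, ComputableIn (toSet Z) f ∧ DNCBoolRel ∅ f } = 0 := by
  refine measure_mono_null (fun Z hZ => ?_) (measure_iUnion_null hμ.measure_dncClass_eq_zero)
  obtain ⟨f, ⟨c, hc⟩, hf⟩ := hZ
  refine Set.mem_iUnion.2 ⟨c, fun e => ⟨cond (f e) 1 0, by cases f e <;> simp, ?_,
    fun hJ => hf e _ hJ rfl⟩⟩
  rw [show cond (f e) 1 0 = Encodable.encode (f e) by cases f e <;> rfl]
  exact (hc e).symm ▸ Part.mem_some _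

end Superhigh
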